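/- For the quadratic P·x² + (θP + sḠH̄ − m)x + θsḠH̄ = 0 with θ, s, Ḡ, H̄ > 0: if P > sθḠ/H̄ and θP + sḠH̄ + 2√(sθPḠH̄) < m < (P + sḠ)(θ + H̄), then the quadratic has two distinct real roots, both lying in the open interval (0, H̄). -/

import Mathlib

open Set

/-!
The quadratic `f x = P x² + b x + c` with `b = θP + sḠH̄ - m` and `c = θsḠH̄` has
`4Pc = (2√(sθPḠH̄))² < b²` by the lower bound on `m`, so it has two distinct real roots.
Both lie in `(0, H̄)`: `f > 0` on `(-∞, 0]` since `b < 0 < c`, and on `[H̄, ∞)` since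
`f H̄ = H̄ ((P + sḠ)(θ + H̄) - m) > 0` and `f` increases there, its vertex `-b / 2P`
lying below `H̄` because `P H̄ > sθḠ`.
-/

theorem exists_ne_quadratic_eq_zero {K : Type*} [Field K] [NeZero (2 : K)] {a b c s : K}
    (ha : a ≠ 0) (hs : s ≠ 0) (h : discrim a b c = s * s) :
    ∃ x y, x ≠ y ∧ a * (x * x) + b * x + c = 0 ∧ a * (y * y) + b * y + c = 0 := by
  refine ⟨(-b + s) / (2 * a), (-b - s) / (2 * a), ?_, ?_, ?_⟩
  · rw [Ne, div_left_inj' (mul_ne_zero two_ne_zero ha)]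
    intro hxy
    exact hs ((mul_eq_zero.1 (by linear_combination hxy : s * 2 = 0)).resolve_right two_ne_zero)
  · exact (quadratic_eq_zero_iff ha h _).2 (Or.inl rfl)
  · exact (quadratic_eq_zero_iff ha h _).2 (Or.inr rfl)

section RootLocation

variable {R : Type*} [CommRing R] [LinearOrder R] [IsStrictOrderedRing R] {a b c x : R}

theorem pos_of_quadratic_eq_zero (ha : 0 ≤ a) (hb : b ≤ 0) (hc : 0 < c)
    (hx : a * (x * x) + b * x + c = 0) : 0 < x := by
  by_contra! hx0
  nlinarith [mul_nonneg ha (mul_self_nonneg x), mul_nonneg_of_nonpos_of_nonpos hb hx0]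

theorem lt_of_quadratic_eq_zero {h : R} (ha : 0 ≤ a) (hvertex : 0 < 2 * a * h + b)
    (hfh : 0 < a * (h * h) + b * h + c) (hx : a * (x * x) + b * x + c = 0) : x < h := by
  by_contra! hhx
  have hslope : 0 < a * (x + h) + b := by nlinarith [mul_nonneg ha (sub_nonneg.2 hhx)]
  nlinarith [mul_nonneg (sub_nonneg.2 hhx) hslope.le]

end RootLocation

/-- For the quadratic `P x² + (θP + sḠH̄ - m) x + θsḠH̄ = 0` with
`θ, s, Ḡ, H̄ > 0`, if `P > sθḠ/H̄` and
`θP + sḠH̄ + 2√(sθPḠH̄) < m < (P + sḠ)(θ + H̄)`, then the quadratic has two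
distinct real roots, both in the open interval `(0, H̄)`. -/
theorem quadratic_two_roots_in_interval
    (P s G H θ m : ℝ)
    (hθ : 0 < θ) (hs : 0 < s) (hG : 0 < G) (hH : 0 < H)
    (hP : P > s * θ * G / H)
    (hml : θ * P + s * G * H + 2 * Real.sqrt (s * θ * P * G * H) < m)
    (hmu : m < (P + s * G) * (θ + H))
    (f : ℝ → ℝ)
    (hf : f = fun x => P * x ^ 2 + (θ * P + s * G * H - m) * x + θ * s * G * H) :
    ∃ x y : ℝ, x ≠ y ∧ f x = 0 ∧ f y = 0 ∧ x ∈ Ioo 0 H ∧ y ∈ Ioo 0 H := by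
  set b := θ * P + s * G * H - m
  set c := θ * s * G * H
  have hPH : s * θ * G < P * H := (div_lt_iff₀ hH).1 hP
  have hP0 : 0 < P := (div_pos (by positivity) hH).trans hP
  have hc : 0 < c := by positivity
  have hr0 : 0 ≤ Real.sqrt (s * θ * P * G * H) := Real.sqrt_nonneg _
  have hr : Real.sqrt (s * θ * P * G * H) ^ 2 = P * c := by
    rw [Real.sq_sqrt (by positivity)]; ring
  have hb : 2 * Real.sqrt (s * θ * P * G * H) < -b := by linarith
  have hdisc : 0 < discrim P b c := by rw [discrim]; nlinarith
  have hvertex : 0 < 2 * P * H + b := by nlinarith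
  have hfH : 0 < P * (H * H) + b * H + c := by nlinarith [mul_pos hH (sub_pos.2 hmu)]
  have hmem : ∀ x, P * (x * x) + b * x + c = 0 → x ∈ Ioo 0 H := fun x hx =>
    ⟨pos_of_quadratic_eq_zero hP0.le (by linarith) hc hx,
      lt_of_quadratic_eq_zero hP0.le hvertex hfH hx⟩
  obtain ⟨x, y, hxy, hx, hy⟩ := exists_ne_quadratic_eq_zero hP0.ne' (Real.sqrt_pos.2 hdisc).ne'
    (Real.mul_self_sqrt hdisc.le).symm
  subst hf
  exact ⟨x, y, hxy, by simpa [sq] using hx, by simpa [sq] using hy, hmem x hx, hmem y hy⟩
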